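/- Let N ≥ 2, and let (w¹, P¹) (with K₁ ≥ 1 cells) and (w², P²) (with K₂ ≥ 1 cells) be two configurations on the same N classes, with confidences e₁ and e₂ and base-2 entropy impurities I₁ = ∑_k ∑_i w¹ k · (−P¹ k i · logb 2 (P¹ k i)) and I₂ = ∑_k ∑_i w² k · (−P² k i · logb 2 (P² k i)) (with 0·logb 2 0 interpreted as 0). Suppose e₂ ≤ e₁ < 1 and logb 2 N ≥ S(e₁), where S(e) = ((1−e) + sqrt(4·H(e)·(−logb 2 e) + (1−e)²)) / (−2·logb 2 e) and H(e) = −(e·logb 2 e + (1−e)·logb 2 (1−e)). Then I₁ ≤ (logb 2 N)²·I₂. (Paper's Theorem 9: under the condition N ≥ 2^{S(e^max)}, the maximum-likelihood algorithm is a log²N-approximation for entropy impurity minimization.) -/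

import Mathlib

open Finset

/-- The maximum of a real-valued vector over the finite index set `Fin N` (`N > 0`). -/
noncomputable def colMax {N : ℕ} (hN : 0 < N) (v : Fin N → ℝ) : ℝ :=
  Finset.univ.sup' (Finset.univ_nonempty_iff.mpr ⟨⟨0, hN⟩⟩) v

/-!
Write `m_k` for the largest class probability in cell `k`, so that the confidence is
`e = ∑ w_k m_k`. The min-entropy bound `H(P_k) ≥ -log m_k` and concavity of `log` give
`I₂ ≥ -log e₂ ≥ -log e₁`. Fano's inequality `H(P_k) ≤ h(m_k) + (1 - m_k) log N` and concavity
of the binary entropy `h` give `I₁ ≤ h(e₁) + (1 - e₁) log N`. In base 2, the hypothesis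
`log N ≥ S(e₁)` says that `L = log N` lies beyond the larger root of `g L² - (1 - e₁) L - h(e₁)`,
where `g = -log e₁`; hence `I₁ ≤ h(e₁) + (1 - e₁) L ≤ g L² ≤ L² I₂`.
-/

open Real

section Entropy

variable {ι : Type*}

theorem sum_negMulLog_le_negMulLog_sum_add_mul_log_card (t : Finset ι) {x : ι → ℝ}
    (hx : ∀ i ∈ t, 0 ≤ x i) :
    ∑ i ∈ t, negMulLog (x i) ≤ negMulLog (∑ i ∈ t, x i) + (∑ i ∈ t, x i) * log #t := by
  rcases t.eq_empty_or_nonempty with rfl | ht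
  · simp
  have hn : (0 : ℝ) < (#t : ℝ)⁻¹ := by simpa using ht.card_pos
  have jensen := concaveOn_negMulLog.le_map_sum (t := t) (w := fun _ ↦ (#t : ℝ)⁻¹) (p := x)
    (fun _ _ ↦ hn.le) (by simp [ht.card_pos.ne']) hx
  have hinv : negMulLog (#t : ℝ)⁻¹ = (#t : ℝ)⁻¹ * log #t := by simp [negMulLog, log_inv]
  simp only [smul_eq_mul, ← mul_sum, negMulLog_mul, hinv] at jensen
  refine le_of_mul_le_mul_left ?_ hn
  linarith

/-- Fano's inequality, with the outcome `j` as the guess. -/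
theorem sum_negMulLog_le_qaryEntropy [Fintype ι] {p : ι → ℝ} (hp : ∀ i, 0 ≤ p i)
    (hsum : ∑ i, p i = 1) (j : ι) :
    ∑ i, negMulLog (p i) ≤ qaryEntropy (Fintype.card ι) (1 - p j) := by
  classical
  have hrest : ∑ i ∈ univ.erase j, p i = 1 - p j := by
    rw [← hsum, ← add_sum_erase univ p (mem_univ j), add_sub_cancel_left]
  have hcard : ((#(univ.erase j) : ℕ) : ℝ) = ((Fintype.card ι : ℤ) - 1 : ℤ) := by
    rw [card_erase_of_mem (mem_univ j), card_univ, Nat.cast_sub (Fintype.card_pos_iff.mpr ⟨j⟩)]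
    push_cast; rfl
  have := sum_negMulLog_le_negMulLog_sum_add_mul_log_card (univ.erase j) fun i _ ↦ hp i
  rw [hrest, hcard] at this
  rw [← add_sum_erase univ _ (mem_univ j), qaryEntropy, binEntropy_one_sub,
    binEntropy_eq_negMulLog_add_negMulLog_one_sub]
  linarith

theorem neg_log_le_sum_negMulLog [Fintype ι] {p : ι → ℝ} (hp : ∀ i, 0 ≤ p i)
    (hsum : ∑ i, p i = 1) {m : ℝ} (hm : ∀ i, p i ≤ m) :
    -log m ≤ ∑ i, negMulLog (p i) := by
  have hterm : ∀ i, p i * -log m ≤ negMulLog (p i) := fun i ↦ by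
    rcases (hp i).eq_or_lt with h | h
    · simp [← h]
    · have := log_le_log h (hm i)
      rw [negMulLog]
      nlinarith
  calc -log m = ∑ i, p i * -log m := by rw [← sum_mul, hsum, one_mul]
    _ ≤ ∑ i, negMulLog (p i) := sum_le_sum fun i _ ↦ hterm i

theorem qaryEntropy_le_mul_log_add_binEntropy {q : ℕ} (hq : 2 ≤ q) {p : ℝ} (hp : 0 ≤ p) :
    qaryEntropy q p ≤ p * log q + binEntropy p := by
  rw [qaryEntropy]
  have hq' : (2 : ℝ) ≤ q := by exact_mod_cast hq
  gcongr <;> push_cast <;> linarith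

theorem binEntropy_div_log (b p : ℝ) :
    binEntropy p / log b = -(p * logb b p + (1 - p) * logb b (1 - p)) := by
  simp only [binEntropy, log_inv, logb]
  ring

end Entropy

theorem mul_add_le_mul_sq_of_root_le {a b c x : ℝ} (ha : 0 < a)
    (hx : (b + √(4 * c * a + b ^ 2)) / (2 * a) ≤ x) : b * x + c ≤ a * x ^ 2 := by
  rw [div_le_iff₀ (by positivity)] at hx
  have hsq : 4 * c * a + b ^ 2 ≤ (2 * a * x - b) ^ 2 := (sqrt_le_iff.mp (by linarith)).2
  nlinarith

section ColMax

variable {N : ℕ} (hN : 0 < N)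

theorem le_colMax (v : Fin N → ℝ) (i : Fin N) : v i ≤ colMax hN v :=
  le_sup' v (mem_univ i)

theorem exists_eq_colMax (v : Fin N → ℝ) : ∃ i, colMax hN v = v i := by
  obtain ⟨i, -, h⟩ := exists_mem_eq_sup' _ v
  exact ⟨i, h⟩

theorem colMax_le_one {p : Fin N → ℝ} (hp : ∀ i, 0 ≤ p i) (hsum : ∑ i, p i = 1) :
    colMax hN p ≤ 1 :=
  sup'_le _ _ fun i _ ↦ hsum ▸ single_le_sum (fun j _ ↦ hp j) (mem_univ i)

theorem colMax_pos {p : Fin N → ℝ} (hsum : ∑ i, p i = 1) : 0 < colMax hN p := by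
  by_contra! h
  have : ∑ i, p i ≤ 0 := sum_nonpos fun i _ ↦ (le_colMax hN p i).trans h
  linarith

end ColMax

section Impurity

variable {κ ι : Type*} [Fintype κ] [Fintype ι] {N : ℕ} (hN : 0 < N)

noncomputable def confidence (w : κ → ℝ) (P : κ → Fin N → ℝ) : ℝ :=
  ∑ k, w k * colMax hN (P k)

noncomputable def entropyImpurity (w : κ → ℝ) (P : κ → ι → ℝ) : ℝ :=
  ∑ k, w k * ∑ i, negMulLog (P k i)

theorem sum_sum_mul_neg_mul_logb (b : ℝ) (w : κ → ℝ) (P : κ → ι → ℝ) :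
    ∑ k, ∑ i, w k * -(P k i * logb b (P k i)) = entropyImpurity w P / log b := by
  simp only [entropyImpurity, negMulLog, logb, mul_sum, sum_div]
  exact sum_congr rfl fun k _ ↦ sum_congr rfl fun i _ ↦ by ring

variable {w : κ → ℝ} {P : κ → Fin N → ℝ}

theorem confidence_pos (hw : ∀ k, 0 ≤ w k) (hws : ∑ k, w k = 1) (hPs : ∀ k, ∑ i, P k i = 1) :
    0 < confidence hN w P := by
  simpa [confidence] using
    (convex_Ioi (0 : ℝ)).sum_mem (fun k _ ↦ hw k) hws fun k _ ↦ colMax_pos hN (hPs k)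

theorem neg_log_confidence_le_entropyImpurity (hw : ∀ k, 0 ≤ w k) (hws : ∑ k, w k = 1)
    (hP : ∀ k i, 0 ≤ P k i) (hPs : ∀ k, ∑ i, P k i = 1) :
    -log (confidence hN w P) ≤ entropyImpurity w P := by
  have jensen := strictConcaveOn_log_Ioi.concaveOn.le_map_sum (t := univ) (w := w)
    (p := fun k ↦ colMax hN (P k)) (fun k _ ↦ hw k) hws fun k _ ↦ colMax_pos hN (hPs k)
  simp only [smul_eq_mul] at jensen
  calc -log (confidence hN w P) ≤ ∑ k, w k * -log (colMax hN (P k)) := by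
        simpa only [mul_neg, sum_neg_distrib, neg_le_neg_iff, confidence] using jensen
    _ ≤ entropyImpurity w P := sum_le_sum fun k _ ↦ mul_le_mul_of_nonneg_left
        (neg_log_le_sum_negMulLog (hP k) (hPs k) (le_colMax hN (P k))) (hw k)

theorem entropyImpurity_le_qaryEntropy (hw : ∀ k, 0 ≤ w k) (hws : ∑ k, w k = 1)
    (hP : ∀ k i, 0 ≤ P k i) (hPs : ∀ k, ∑ i, P k i = 1) :
    entropyImpurity w P ≤ qaryEntropy N (1 - confidence hN w P) := by
  have fano : ∀ k, ∑ i, negMulLog (P k i) ≤ qaryEntropy N (1 - colMax hN (P k)) := fun k ↦ by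
    obtain ⟨j, hj⟩ := exists_eq_colMax hN (P k)
    simpa [hj] using sum_negMulLog_le_qaryEntropy (hP k) (hPs k) j
  have hconf : 1 - confidence hN w P = ∑ k, w k * (1 - colMax hN (P k)) := by
    simp [confidence, mul_sub, sum_sub_distrib, hws]
  have jensen := (strictConcaveOn_qaryEntropy (q := N)).concaveOn.le_map_sum (t := univ) (w := w)
    (p := fun k ↦ 1 - colMax hN (P k)) (fun k _ ↦ hw k) hws fun k _ ↦
      ⟨sub_nonneg.2 (colMax_le_one hN (hP k) (hPs k)), by linarith [colMax_pos hN (hPs k)]⟩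
  calc entropyImpurity w P ≤ ∑ k, w k * qaryEntropy N (1 - colMax hN (P k)) :=
        sum_le_sum fun k _ ↦ mul_le_mul_of_nonneg_left (fano k) (hw k)
    _ ≤ qaryEntropy N (1 - confidence hN w P) := by simpa [hconf] using jensen

end Impurity

/-- Paper's Theorem 9: if `e₂ ≤ e₁ < 1` and `log₂ N ≥ S(e₁)`, then the base-2 entropy
impurity `I₁` of the first configuration is at most `(log₂ N)²` times the impurity
`I₂` of the second. -/
theorem entropy_log_square_approximation (N K₁ K₂ : ℕ) (hN : 2 ≤ N)
    (w₁ : Fin K₁ → ℝ) (hw₁ : ∀ k, 0 ≤ w₁ k) (hws₁ : ∑ k, w₁ k = 1)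
    (P₁ : Fin K₁ → Fin N → ℝ) (hP₁ : ∀ k i, 0 ≤ P₁ k i) (hPs₁ : ∀ k, ∑ i, P₁ k i = 1)
    (w₂ : Fin K₂ → ℝ) (hw₂ : ∀ k, 0 ≤ w₂ k) (hws₂ : ∑ k, w₂ k = 1)
    (P₂ : Fin K₂ → Fin N → ℝ) (hP₂ : ∀ k i, 0 ≤ P₂ k i) (hPs₂ : ∀ k, ∑ i, P₂ k i = 1)
    (e₁ e₂ : ℝ)
    (he₁ : e₁ = ∑ k, w₁ k * colMax (by omega) (P₁ k))
    (he₂ : e₂ = ∑ k, w₂ k * colMax (by omega) (P₂ k))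
    (hee : e₂ ≤ e₁) (he₁lt : e₁ < 1)
    (hcond : ((1 - e₁) + Real.sqrt (4 * (-(e₁ * Real.logb 2 e₁ +
          (1 - e₁) * Real.logb 2 (1 - e₁))) * (-Real.logb 2 e₁) + (1 - e₁) ^ 2)) /
        (-2 * Real.logb 2 e₁) ≤ Real.logb 2 N) :
    ∑ k, ∑ i, w₁ k * (-(P₁ k i * Real.logb 2 (P₁ k i))) ≤
      (Real.logb 2 N) ^ 2 * ∑ k, ∑ i, w₂ k * (-(P₂ k i * Real.logb 2 (P₂ k i))) := by
  have hN0 : 0 < N := by omega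
  have he₁c : e₁ = confidence hN0 w₁ P₁ := he₁
  have he₂c : e₂ = confidence hN0 w₂ P₂ := he₂
  have he₂pos : 0 < e₂ := he₂c ▸ confidence_pos hN0 hw₂ hws₂ hPs₂
  have hlog2 : 0 < log 2 := log_pos one_lt_two
  have hquad : (1 - e₁) * logb 2 N + -(e₁ * logb 2 e₁ + (1 - e₁) * logb 2 (1 - e₁)) ≤
      -logb 2 e₁ * logb 2 N ^ 2 := mul_add_le_mul_sq_of_root_le
    (neg_pos.2 (logb_neg one_lt_two (he₂pos.trans_le hee) he₁lt)) (by convert hcond using 2; ring)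
  have hI₁ : entropyImpurity w₁ P₁ / log 2 ≤ (1 - e₁) * logb 2 N + binEntropy e₁ / log 2 := by
    rw [logb, mul_div_assoc', ← add_div, div_le_div_iff_of_pos_right hlog2]
    calc entropyImpurity w₁ P₁ ≤ qaryEntropy N (1 - e₁) :=
          he₁c ▸ entropyImpurity_le_qaryEntropy hN0 hw₁ hws₁ hP₁ hPs₁
      _ ≤ _ := by simpa using qaryEntropy_le_mul_log_add_binEntropy hN (sub_nonneg.2 he₁lt.le)
  have hI₂ : -logb 2 e₁ ≤ entropyImpurity w₂ P₂ / log 2 := by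
    rw [logb, ← neg_div, div_le_div_iff_of_pos_right hlog2]
    calc -log e₁ ≤ -log e₂ := neg_le_neg (log_le_log he₂pos hee)
      _ ≤ _ := he₂c ▸ neg_log_confidence_le_entropyImpurity hN0 hw₂ hws₂ hP₂ hPs₂
  rw [binEntropy_div_log] at hI₁
  rw [sum_sum_mul_neg_mul_logb, sum_sum_mul_neg_mul_logb]
  calc _ ≤ _ := hI₁
    _ ≤ -logb 2 e₁ * logb 2 N ^ 2 := hquad
    _ ≤ _ := by rw [mul_comm]; gcongr
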